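/- Let L : X → X be linear nonexpansive, b ∈ X, T(x) = Lx + b with Fix T ≠ ∅, and let a = (Id − L)^† b. Then a ∈ (Id − L)^{-1}(b), a = P_{(Fix L)^⊥}(a), and P_{Fix T}(x) = P_{Fix L}(x) + a for all x. -/

import Mathlib

/-!
With `A = Id - L`, a fixed point `x₀` of `T` gives `b = A x₀`, so the Penrose identity `A B A = A`
yields `A a = b`, and the symmetry of `B A` yields `⟪v, B A x₀⟫ = ⟪B A v, x₀⟫ = 0` for `v ∈ ker A`,
i.e. `a ⊥ Fix L`. Hence `Fix T = a + Fix L` with `a ⊥ Fix L`, and the nearest point of this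
translate to `x` is `P_{Fix L} (x - a) + a = P_{Fix L} x + a`.
-/

variable {X : Type*} [NormedAddCommGroup X] [InnerProductSpace ℝ X] [CompleteSpace X]

/-- `B` is the Moore–Penrose (pseudo)inverse of `A`, characterized by the four Penrose
conditions. -/
def IsMoorePenroseInverse (A B : X →L[ℝ] X) : Prop :=
  A ∘L B ∘L A = A ∧ B ∘L A ∘L B = B ∧ IsSelfAdjoint (A ∘L B) ∧ IsSelfAdjoint (B ∘L A)

/-- The fixed-point set `Fix L = {x : L x = x}` of a continuous linear operator,
as a (closed) subspace. -/
noncomputable def fixSpace (L : X →L[ℝ] X) : Submodule ℝ X :=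
  LinearMap.ker ((ContinuousLinearMap.id ℝ X - L : X →L[ℝ] X) : X →ₗ[ℝ] X)

instance (L : X →L[ℝ] X) : CompleteSpace (fixSpace L) :=
  (ContinuousLinearMap.isClosed_ker (ContinuousLinearMap.id ℝ X - L)).completeSpace_coe

theorem Submodule.norm_sub_starProjection_le {𝕜 E : Type*} [RCLike 𝕜] [NormedAddCommGroup E]
    [InnerProductSpace 𝕜 E] (K : Submodule 𝕜 E) [K.HasOrthogonalProjection] (x : E) {v : E}
    (hv : v ∈ K) : ‖x - K.starProjection x‖ ≤ ‖x - v‖ := by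
  rw [Submodule.starProjection_minimal]
  exact ciInf_le ⟨0, Set.forall_mem_range.2 fun _ => norm_nonneg _⟩ (⟨v, hv⟩ : K)

theorem Submodule.norm_sub_starProjection_add_le {𝕜 E : Type*} [RCLike 𝕜] [NormedAddCommGroup E]
    [InnerProductSpace 𝕜 E] (K : Submodule 𝕜 E) [K.HasOrthogonalProjection] (x : E) {a w : E}
    (ha : a ∈ Kᗮ) (hw : w - a ∈ K) : ‖x - (K.starProjection x + a)‖ ≤ ‖x - w‖ := by
  have hPa : K.starProjection (x - a) = K.starProjection x := by
    rw [map_sub, K.starProjection_apply_eq_zero_iff.2 ha, sub_zero]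
  calc ‖x - (K.starProjection x + a)‖ = ‖(x - a) - K.starProjection (x - a)‖ := by
        rw [hPa]; congr 1; abel
    _ ≤ ‖(x - a) - (w - a)‖ := K.norm_sub_starProjection_le (x - a) hw
    _ = ‖x - w‖ := by rw [sub_sub_sub_cancel_right]

namespace IsMoorePenroseInverse

variable {A B : X →L[ℝ] X}

theorem apply_apply_apply (h : IsMoorePenroseInverse A B) (x : X) : A (B (A x)) = A x :=
  DFunLike.congr_fun h.1 x

theorem apply_apply_mem_orthogonal_ker (h : IsMoorePenroseInverse A B) (x : X) :
    B (A x) ∈ (LinearMap.ker (A : X →ₗ[ℝ] X))ᗮ := by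
  intro v hv
  calc inner ℝ v (B (A x)) = inner ℝ (B (A v)) x := (h.2.2.2.isSymmetric v x).symm
    _ = 0 := by rw [show A v = 0 from hv, map_zero, inner_zero_left]

end IsMoorePenroseInverse

theorem stmt9_general (L : X →L[ℝ] X) (b : X)
    (T : X → X) (hT : ∀ x, T x = L x + b)
    (hfix : {x | T x = x}.Nonempty)
    (B : X →L[ℝ] X) (hB : IsMoorePenroseInverse (ContinuousLinearMap.id ℝ X - L) B)
    (a : X) (ha : a = B b) :
    (ContinuousLinearMap.id ℝ X - L) a = b ∧
      a = (Submodule.orthogonalProjectionOnto (fixSpace L)ᗮ a : X) ∧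
      ∀ x : X,
        (Submodule.orthogonalProjectionOnto (fixSpace L) x : X) + a ∈ {x | T x = x} ∧
          ∀ w ∈ {x | T x = x},
            ‖x - ((Submodule.orthogonalProjectionOnto (fixSpace L) x : X) + a)‖ ≤ ‖x - w‖ := by
  set A := ContinuousLinearMap.id ℝ X - L
  have hFixT : ∀ w, w ∈ {x | T x = x} ↔ A w = b := fun w => by
    show T w = w ↔ w - L w = b
    rw [hT, sub_eq_iff_eq_add', eq_comm]
  obtain ⟨x₀, hx₀⟩ := hfix
  obtain rfl : A x₀ = b := (hFixT x₀).1 hx₀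
  have hAa : A a = A x₀ := ha ▸ hB.apply_apply_apply x₀
  have ha_perp : a ∈ (fixSpace L)ᗮ := ha ▸ hB.apply_apply_mem_orthogonal_ker x₀
  refine ⟨hAa, (Submodule.starProjection_eq_self_iff.2 ha_perp).symm, fun x => ⟨?_, fun w hw => ?_⟩⟩
  · have hPx : A ((fixSpace L).orthogonalProjectionOnto x) = 0 :=
      ((fixSpace L).orthogonalProjectionOnto x).2
    exact (hFixT _).2 (by rw [map_add, hPx, hAa, zero_add])
  · refine (fixSpace L).norm_sub_starProjection_add_le x ha_perp ?_
    show A (w - a) = 0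
    rw [map_sub, (hFixT w).1 hw, hAa, sub_self]

/-- let `L` be linear nonexpansive, `b ∈ X`, `T x = L x + b` with `Fix T ≠ ∅`, and
`a = (Id − L)^† b`.  Then `(Id − L) a = b`, `a = P_{(Fix L)^⊥} a`, and
`P_{Fix T} x = P_{Fix L} x + a` for all `x` (the latter expressed via the nearest-point property
of the metric projection onto the set `Fix T`). -/
theorem stmt9 (L : X →L[ℝ] X) (hL : ∀ x, ‖L x‖ ≤ ‖x‖) (b : X)
    (T : X → X) (hT : ∀ x, T x = L x + b)
    (hfix : {x | T x = x}.Nonempty)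
    (B : X →L[ℝ] X) (hB : IsMoorePenroseInverse (ContinuousLinearMap.id ℝ X - L) B)
    (a : X) (ha : a = B b) :
    (ContinuousLinearMap.id ℝ X - L) a = b ∧
      a = (Submodule.orthogonalProjectionOnto (fixSpace L)ᗮ a : X) ∧
      ∀ x : X,
        (Submodule.orthogonalProjectionOnto (fixSpace L) x : X) + a ∈ {x | T x = x} ∧
          ∀ w ∈ {x | T x = x},
            ‖x - ((Submodule.orthogonalProjectionOnto (fixSpace L) x : X) + a)‖ ≤ ‖x - w‖ :=
  stmt9_general L b T hT hfix B hB a ha
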